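/- The extended reward admits the recursive expression: for all (s,a), r̃_{T−1}(s,a) = r(s,a)², and for every t ∈ {0,…,T−2}, r̃_t(s,a) = 2·q_{π,t}(s,a)·r(s,a) − r(s,a)² + Σ_{s'} Σ_{a'} p(s'|s,a)·π_{t+1}(a'|s')·(π_{t+1}(a'|s')/μ*_{t+1}(a'|s'))·r̃_{t+1}(s',a'), where the inner sum is over a' with μ*_{t+1}(a'|s') > 0. -/

import Mathlib

open Finset

section MDPDefs

variable {S A : Type} [Fintype S] [Fintype A]

/-- State value `v_{π,t}(s)` of policy `π` for reward `r`, with `n` remaining steps at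
time `t`; the paper's `v_{π,t}(s)` (horizon `T`) is `vval p r π (T − t) t s`. -/
noncomputable def vval (p : S → A → S → ℝ) (r : S → A → ℝ) (π : ℕ → S → A → ℝ) :
    ℕ → ℕ → S → ℝ
  | 0, _, _ => 0
  | n + 1, t, s => ∑ a, π t s a * (r s a + ∑ s', p s a s' * vval p r π n (t + 1) s')

/-- Action value `q_{π,t}(s,a) = r(s,a) + ∑_{s'} p(s'|s,a) v_{π,t+1}(s')`, where `n`
steps remain after the current one; the paper's `q_{π,t}` is `qval p r π (T − t − 1) t`. -/
noncomputable def qval (p : S → A → S → ℝ) (r : S → A → ℝ) (π : ℕ → S → A → ℝ)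
    (n t : ℕ) (s : S) (a : A) : ℝ :=
  r s a + ∑ s', p s a s' * vval p r π n (t + 1) s'

/-- `ν_{π,t}(s,a) = Var_{s' ∼ p(·|s,a)}(v_{π,t+1}(s'))`, with `n = T − t − 1`
remaining steps after the current one (in particular `ν_{π,T−1} ≡ 0` since `v_{π,T} ≡ 0`). -/
noncomputable def nuVar (p : S → A → S → ℝ) (r : S → A → ℝ) (π : ℕ → S → A → ℝ)
    (n t : ℕ) (s : S) (a : A) : ℝ :=
  (∑ s', p s a s' * (vval p r π n (t + 1) s') ^ 2)
    - (∑ s', p s a s' * vval p r π n (t + 1) s') ^ 2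

/-- Probability, under behavior policy `μ`, of the trajectory
`τ = (A_t, S_{t+1}, A_{t+1}, …, S_{t+n})` of `n` steps starting from state `s` at
time `t`: actions `A_k ∼ μ_k(·|S_k)` and states `S_{k+1} ∼ p(·|S_k, A_k)`. -/
noncomputable def trajProb (p : S → A → S → ℝ) (μ : ℕ → S → A → ℝ) :
    (n : ℕ) → ℕ → S → (Fin n → A × S) → ℝ
  | 0, _, _, _ => 1
  | n + 1, t, s, τ =>
      μ t s (τ 0).1 * p s (τ 0).1 (τ 0).2 *
        trajProb p μ n (t + 1) (τ 0).2 (fun i => τ i.succ)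

/-- PDIS return `G^PDIS(τ^{μ_{t:t+n−1}}_{t:t+n−1}) = ∑_{k=t}^{t+n−1} (∏_{j=t}^{k} ρ_j) R_{k+1}`
(in its equivalent recursive form) along trajectory `τ` from state `s` at time `t`,
where `ρ_j = π_j(A_j|S_j)/μ_j(A_j|S_j)` and `R_{k+1} = r(S_k, A_k)`. -/
noncomputable def pdis (r : S → A → ℝ) (π μ : ℕ → S → A → ℝ) :
    (n : ℕ) → ℕ → S → (Fin n → A × S) → ℝ
  | 0, _, _, _ => 0
  | n + 1, t, s, τ =>
      π t s (τ 0).1 / μ t s (τ 0).1 *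
        (r s (τ 0).1 + pdis r π μ n (t + 1) (τ 0).2 (fun i => τ i.succ))

/-- Conditional expectation `E[f(τ) | S_t = s]` over `n`-step trajectories generated
by the behavior policy `μ` from state `s` at time `t`. -/
noncomputable def expTraj (p : S → A → S → ℝ) (μ : ℕ → S → A → ℝ) (n t : ℕ) (s : S)
    (f : (Fin n → A × S) → ℝ) : ℝ :=
  ∑ τ : Fin n → A × S, trajProb p μ n t s τ * f τ

/-- Conditional variance `Var(G^PDIS(τ^{μ_{t:T−1}}_{t:T−1}) | S_t = s)` with
`n = T − t` remaining steps. -/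
noncomputable def pdisVar (p : S → A → S → ℝ) (r : S → A → ℝ) (π μ : ℕ → S → A → ℝ)
    (n t : ℕ) (s : S) : ℝ :=
  expTraj p μ n t s (fun τ => (pdis r π μ n t s τ) ^ 2)
    - (expTraj p μ n t s (pdis r π μ n t s)) ^ 2

/-- Conditional variance `Var(G^PDIS(τ^{μ_{t+1:T−1}}_{t+1:T−1}) | S_t = s, A_t = a)`,
where `S_{t+1} ∼ p(·|s,a)` and then the trajectory is generated by `μ` from `S_{t+1}`;
here `n = T − t − 1`. -/
noncomputable def pdisVarSA (p : S → A → S → ℝ) (r : S → A → ℝ) (π μ : ℕ → S → A → ℝ)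
    (n t : ℕ) (s : S) (a : A) : ℝ :=
  (∑ s', p s a s' * expTraj p μ n (t + 1) s' (fun τ => (pdis r π μ n (t + 1) s' τ) ^ 2))
    - (∑ s', p s a s' * expTraj p μ n (t + 1) s' (pdis r π μ n (t + 1) s')) ^ 2

/-- Extended reward `r̃_t(s,a)` (horizon `T`) computed with continuation behavior
policy `μ`: `r̃_{T−1}(s,a) = r(s,a)²`, and for `t ≤ T−2`,
`r̃_t(s,a) = ν_{π,t}(s,a) + q_{π,t}(s,a)² + ∑_{s'} p(s'|s,a) Var(G^PDIS(τ^{μ_{t+1:T−1}}) | S_{t+1} = s')`. -/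
noncomputable def rtilde (p : S → A → S → ℝ) (r : S → A → ℝ) (π μ : ℕ → S → A → ℝ)
    (T t : ℕ) (s : S) (a : A) : ℝ :=
  if t + 1 = T then (r s a) ^ 2
  else
    nuVar p r π (T - t - 1) t s a + (qval p r π (T - t - 1) t s a) ^ 2
      + ∑ s', p s a s' * pdisVar p r π μ (T - t - 1) (t + 1) s'

/-- Total (unconditional) variance `Var(G^PDIS(τ^{μ_{0:T−1}}_{0:T−1}))` of the PDIS
estimator, including the randomness of the initial state `S_0 ∼ p0`. -/
noncomputable def pdisTotalVar (p : S → A → S → ℝ) (r : S → A → ℝ) (π μ : ℕ → S → A → ℝ)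
    (p0 : S → ℝ) (T : ℕ) : ℝ :=
  (∑ s, p0 s * expTraj p μ T 0 s (fun τ => (pdis r π μ T 0 s τ) ^ 2))
    - (∑ s, p0 s * expTraj p μ T 0 s (pdis r π μ T 0 s)) ^ 2

/-- Feasible set of the step-wise constrained problem at time `t` and state `s`:
probability distributions `ν` on `A` satisfying the coverage condition
`ν a = 0 → π_t(a|s) q_{π,t}(s,a) = 0` and the safety constraint
`∑ a, ν a * q^c_{μ*,t}(s,a) ≤ (1 + ε) v^c_{π,t}(s)`. -/
noncomputable def stepFeasible (p : S → A → S → ℝ) (r c : S → A → ℝ)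
    (π μstar : ℕ → S → A → ℝ) (T : ℕ) (ε : ℝ) (t : ℕ) (s : S) : Set (A → ℝ) :=
  {ν | (∀ a, 0 ≤ ν a) ∧ (∑ a, ν a) = 1 ∧
    (∀ a, ν a = 0 → π t s a * qval p r π (T - t - 1) t s a = 0) ∧
    (∑ a, ν a * qval p c μstar (T - t - 1) t s a) ≤ (1 + ε) * vval p c π (T - t) t s}

/-- Objective `∑_{a : ν a > 0} π_t(a|s)² r̃_t(s,a) / ν a` of the step-wise constrained
problem at time `t` and state `s`, where `r̃_t` is computed with continuation policy
`μ*_{t+1:T−1}`. -/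
noncomputable def stepObj (p : S → A → S → ℝ) (r : S → A → ℝ) (π μstar : ℕ → S → A → ℝ)
    (T t : ℕ) (s : S) (ν : A → ℝ) : ℝ :=
  ∑ a ∈ Finset.univ.filter (fun a => 0 < ν a),
    (π t s a) ^ 2 * rtilde p r π μstar T t s a / ν a

end MDPDefs

/-!
Write the PDIS return from `t` as `G = ρ_t (r(S_t, A_t) + G')`, with `G'` the return from `t + 1`.
Because `μ*` covers every action that `π` plays with nonzero `q`-value, `G'` is unbiased for
`v_{π,t+1}`. Hence `Var(G' | s') = E[G'² | s'] - v_{π,t+1}(s')²`, and the defining sum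
`ν + q² + ∑ p Var` collapses to `E[(r + G')² | s, a] = 2 q r - r² + ∑ p E[G'² | s']`.
Conditioning on the first step,
`E[G² | s] = ∑_{a : μ(a|s) > 0} π(a|s)² E[(r + G')² | s, a] / μ(a|s)`, which is the step
objective at `μ` itself. Substituting this at time `t + 1` into the previous identity gives the
recursion.
-/

lemma sum_mul_const_add {ι : Type*} [Fintype ι] {w : ι → ℝ} (hw : ∑ i, w i = 1) (c : ℝ)
    (f : ι → ℝ) : ∑ i, w i * (c + f i) = c + ∑ i, w i * f i := by
  simp only [mul_add, Finset.sum_add_distrib, ← Finset.sum_mul, hw, one_mul]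

lemma sum_mul_div_mul_of_eq_zero {ι : Type*} [Fintype ι] {w x y : ι → ℝ}
    (h : ∀ i, w i = 0 → x i * y i = 0) : ∑ i, w i * (x i / w i) * y i = ∑ i, x i * y i := by
  refine Finset.sum_congr rfl fun i _ => ?_
  by_cases hi : w i = 0
  · simp [hi, h i hi]
  · field_simp

lemma sum_mul_div_sq_mul {ι : Type*} [Fintype ι] {w x y : ι → ℝ} (hw : ∀ i, 0 ≤ w i) :
    ∑ i, w i * (x i / w i) ^ 2 * y i
      = ∑ i ∈ univ.filter (fun i => 0 < w i), x i ^ 2 * y i / w i := by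
  rw [Finset.sum_filter]
  refine Finset.sum_congr rfl fun i _ => ?_
  split_ifs with hi
  · field_simp
  · simp [le_antisymm (not_lt.1 hi) (hw i)]

section PDISMoments

variable {S A : Type} [Fintype S] [Fintype A] (p : S → A → S → ℝ) (r : S → A → ℝ)
  (π μ : ℕ → S → A → ℝ)

lemma expTraj_succ (n t : ℕ) (s : S) (f : (Fin (n + 1) → A × S) → ℝ) :
    expTraj p μ (n + 1) t s f
      = ∑ a, ∑ s', μ t s a * p s a s' *
          expTraj p μ n (t + 1) s' (fun g => f (Fin.cons (a, s') g)) := by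
  rw [expTraj, ← (Fin.consEquiv fun _ => A × S).sum_comp, Fintype.sum_prod_type,
    Fintype.sum_prod_type]
  simp only [expTraj, Finset.mul_sum]
  refine Finset.sum_congr rfl fun a _ => Finset.sum_congr rfl fun s' _ =>
    Finset.sum_congr rfl fun g _ => ?_
  simp only [Fin.consEquiv, Equiv.coe_fn_mk, trajProb, Fin.cons_zero, Fin.cons_succ]
  ring

lemma expTraj_add (n t : ℕ) (s : S) (f g : (Fin n → A × S) → ℝ) :
    expTraj p μ n t s (fun τ => f τ + g τ) = expTraj p μ n t s f + expTraj p μ n t s g := by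
  simp only [expTraj, mul_add, Finset.sum_add_distrib]

lemma expTraj_const_mul (n t : ℕ) (s : S) (c : ℝ) (f : (Fin n → A × S) → ℝ) :
    expTraj p μ n t s (fun τ => c * f τ) = c * expTraj p μ n t s f := by
  simp only [expTraj, Finset.mul_sum, mul_left_comm]

lemma expTraj_const {T : ℕ} (hp : ∀ s a, ∑ s', p s a s' = 1)
    (hμ : ∀ t < T, ∀ s, ∑ a, μ t s a = 1) (c : ℝ) :
    ∀ n t, t + n ≤ T → ∀ s : S, expTraj p μ n t s (fun _ => c) = c := by
  intro n
  induction n with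
  | zero => intro t _ s; simp [expTraj, trajProb]
  | succ n ih =>
    intro t ht s
    simp only [expTraj_succ, ih (t + 1) (by omega), ← Finset.sum_mul, ← Finset.mul_sum, hp,
      mul_one, hμ t (by omega) s, one_mul]

lemma expTraj_pdis_succ_pow (k n t : ℕ) (s : S) :
    expTraj p μ (n + 1) t s (fun τ => pdis r π μ (n + 1) t s τ ^ k)
      = ∑ a, μ t s a * (π t s a / μ t s a) ^ k *
          ∑ s', p s a s' *
            expTraj p μ n (t + 1) s' (fun g => (r s a + pdis r π μ n (t + 1) s' g) ^ k) := by
  simp only [expTraj_succ, pdis, Fin.cons_zero, Fin.cons_succ, mul_pow, expTraj_const_mul,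
    Finset.mul_sum]
  refine Finset.sum_congr rfl fun a _ => Finset.sum_congr rfl fun s' _ => ?_
  ring

def IsCoveringBehavior (T : ℕ) : Prop :=
  ∀ t < T, ∀ s, (∀ a, 0 ≤ μ t s a) ∧ ∑ a, μ t s a = 1 ∧
    ∀ a, μ t s a = 0 → π t s a * qval p r π (T - t - 1) t s a = 0

noncomputable def pdisSecondMoment (n t : ℕ) (s : S) : ℝ :=
  expTraj p μ n t s (fun τ => pdis r π μ n t s τ ^ 2)

lemma pdisSecondMoment_succ {n t : ℕ} {s : S} (hμ : ∀ a, 0 ≤ μ t s a) :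
    pdisSecondMoment p r π μ (n + 1) t s
      = ∑ a ∈ univ.filter (fun a => 0 < μ t s a), π t s a ^ 2 *
          (∑ s', p s a s' *
            expTraj p μ n (t + 1) s' (fun g => (r s a + pdis r π μ n (t + 1) s' g) ^ 2))
          / μ t s a := by
  rw [pdisSecondMoment, expTraj_pdis_succ_pow, sum_mul_div_sq_mul hμ]

variable {p r π μ} {T : ℕ}

namespace IsCoveringBehavior

lemma sum_eq_one (h : IsCoveringBehavior p r π μ T) : ∀ t < T, ∀ s, ∑ a, μ t s a = 1 :=
  fun t ht s => (h t ht s).2.1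

variable (h : IsCoveringBehavior p r π μ T) (hp : ∀ s a, ∑ s', p s a s' = 1)
include h hp

lemma expTraj_pdis_eq_vval : ∀ n t, t + n = T → ∀ s : S,
    expTraj p μ n t s (pdis r π μ n t s) = vval p r π n t s := by
  intro n
  induction n with
  | zero => intro t _ s; simp [expTraj, trajProb, pdis, vval]
  | succ n ih =>
    intro t ht s
    have hcov := (h t (by omega) s).2.2
    rw [show T - t - 1 = n by omega] at hcov
    have hfirst := expTraj_pdis_succ_pow p r π μ 1 n t s
    simp only [pow_one] at hfirst
    have hq : ∀ a, ∑ s', p s a s' * expTraj p μ n (t + 1) s'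
        (fun g => r s a + pdis r π μ n (t + 1) s' g) = qval p r π n t s a := fun a => by
      simp only [expTraj_add, expTraj_const p μ hp h.sum_eq_one _ n (t + 1)
        (by omega), ih (t + 1) (by omega), sum_mul_const_add (hp s a), qval]
    simp only [hfirst, hq]
    exact sum_mul_div_mul_of_eq_zero hcov

lemma expTraj_add_pdis_sq {n t : ℕ} (htn : t + n = T) (s : S) (c : ℝ) :
    expTraj p μ n t s (fun g => (c + pdis r π μ n t s g) ^ 2)
      = c ^ 2 + 2 * c * vval p r π n t s + pdisSecondMoment p r π μ n t s := by
  have hexpand : (fun g => (c + pdis r π μ n t s g) ^ 2)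
      = fun g => c ^ 2 + (2 * c * pdis r π μ n t s g + pdis r π μ n t s g ^ 2) := by
    funext g; ring
  rw [hexpand, expTraj_add, expTraj_const p μ hp h.sum_eq_one _ n t htn.le,
    expTraj_add, expTraj_const_mul, h.expTraj_pdis_eq_vval hp n t htn, pdisSecondMoment,
    add_assoc]

lemma sum_expTraj_add_pdis_sq {n t : ℕ} (htn : t + 1 + n = T) (s : S) (a : A) :
    ∑ s', p s a s' *
        expTraj p μ n (t + 1) s' (fun g => (r s a + pdis r π μ n (t + 1) s' g) ^ 2)
      = 2 * qval p r π n t s a * r s a - r s a ^ 2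
          + ∑ s', p s a s' * pdisSecondMoment p r π μ n (t + 1) s' := by
  simp only [h.expTraj_add_pdis_sq hp htn, add_assoc]
  rw [sum_mul_const_add (hp s a)]
  simp only [mul_add, Finset.sum_add_distrib, mul_left_comm _ (2 * r s a), ← Finset.mul_sum, qval]
  ring

lemma rtilde_eq_pdisSecondMoment {t : ℕ} (ht : t < T) (s : S) (a : A) :
    rtilde p r π μ T t s a
      = 2 * qval p r π (T - t - 1) t s a * r s a - r s a ^ 2
          + ∑ s', p s a s' * pdisSecondMoment p r π μ (T - t - 1) (t + 1) s' := by
  rw [rtilde]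
  split_ifs with hT
  · rw [show T - t - 1 = 0 by omega]
    simp [qval, vval, pdisSecondMoment, expTraj, trajProb, pdis]
    ring
  · have hvar : ∀ s', pdisVar p r π μ (T - t - 1) (t + 1) s'
        = pdisSecondMoment p r π μ (T - t - 1) (t + 1) s'
          - vval p r π (T - t - 1) (t + 1) s' ^ 2 :=
      fun s' => by rw [pdisVar, h.expTraj_pdis_eq_vval hp _ _ (by omega), pdisSecondMoment]
    simp only [hvar, nuVar, qval, mul_sub, Finset.sum_sub_distrib]
    ring

lemma pdisSecondMoment_eq_stepObj {t : ℕ} (ht : t < T) (s : S) :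
    pdisSecondMoment p r π μ (T - t) t s = stepObj p r π μ T t s (μ t s) := by
  obtain ⟨n, hn⟩ : ∃ n, T - t = n + 1 := ⟨T - t - 1, by omega⟩
  rw [hn, pdisSecondMoment_succ p r π μ (h t ht s).1, stepObj]
  refine Finset.sum_congr rfl fun a _ => ?_
  rw [h.sum_expTraj_add_pdis_sq hp (by omega), h.rtilde_eq_pdisSecondMoment hp ht,
    show T - t - 1 = n by omega]

end IsCoveringBehavior

end PDISMoments

theorem rtilde_recursion_general
    {S A : Type} [Fintype S] [Fintype A]
    (T : ℕ) (hT : 1 ≤ T)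
    (p : S → A → S → ℝ) (r c : S → A → ℝ) (π μstar : ℕ → S → A → ℝ)
    (hp : ∀ s a, (∀ s', 0 ≤ p s a s') ∧ (∑ s', p s a s') = 1)
    (ε : ℝ)
    (hopt : ∀ t, t < T → ∀ s,
      μstar t s ∈ stepFeasible p r c π μstar T ε t s ∧
      ∀ ν ∈ stepFeasible p r c π μstar T ε t s,
        stepObj p r π μstar T t s (μstar t s) ≤ stepObj p r π μstar T t s ν) :
    (∀ (s : S) (a : A), rtilde p r π μstar T (T - 1) s a = (r s a) ^ 2) ∧
    (∀ t, t + 1 < T → ∀ (s : S) (a : A),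
      rtilde p r π μstar T t s a
        = 2 * qval p r π (T - t - 1) t s a * r s a - (r s a) ^ 2
          + ∑ s', ∑ a' ∈ Finset.univ.filter (fun a' => 0 < μstar (t + 1) s' a'),
              p s a s' * π (t + 1) s' a' * (π (t + 1) s' a' / μstar (t + 1) s' a')
                * rtilde p r π μstar T (t + 1) s' a') := by
  have hp_sum s a : ∑ s', p s a s' = 1 := (hp s a).2
  have hcov : IsCoveringBehavior p r π μstar T := fun t ht s =>
    let ⟨hnonneg, hsum, hcover, _⟩ := (hopt t ht s).1
    ⟨hnonneg, hsum, hcover⟩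
  refine ⟨fun s a => by rw [rtilde, if_pos (by omega)], fun t ht s a => ?_⟩
  have hmoment s' : pdisSecondMoment p r π μstar (T - t - 1) (t + 1) s'
      = stepObj p r π μstar T (t + 1) s' (μstar (t + 1) s') :=
    Nat.sub_sub T t 1 ▸ hcov.pdisSecondMoment_eq_stepObj hp_sum ht s'
  rw [hcov.rtilde_eq_pdisSecondMoment hp_sum (by omega)]
  simp only [hmoment, stepObj, Finset.mul_sum]
  congr 1
  refine Finset.sum_congr rfl fun s' _ => Finset.sum_congr rfl fun a' _ => ?_
  ring

/-- **Recursive expression for the extended reward.**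
In the constrained MDP, fix a safety parameter `ε ≥ 0` and let `μ*` be the behavior
policy defined backward in time as the step-wise optimal solution of the constrained
problem at each `t` and `s`. Then the extended reward (computed with continuation
policy `μ*`) satisfies: `r̃_{T−1}(s,a) = r(s,a)²` for all `(s,a)`, and for every
`t ∈ {0,…,T−2}`,
`r̃_t(s,a) = 2 q_{π,t}(s,a) r(s,a) − r(s,a)²
  + ∑_{s'} ∑_{a' : μ*_{t+1}(a'|s')>0} p(s'|s,a) π_{t+1}(a'|s')
      (π_{t+1}(a'|s')/μ*_{t+1}(a'|s')) r̃_{t+1}(s',a')`. -/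
theorem rtilde_recursion
    {S A : Type} [Fintype S] [Fintype A]
    (T : ℕ) (hT : 1 ≤ T)
    (p : S → A → S → ℝ) (r c : S → A → ℝ) (π μstar : ℕ → S → A → ℝ)
    (hp : ∀ s a, (∀ s', 0 ≤ p s a s') ∧ (∑ s', p s a s') = 1)
    (hπ : ∀ t s, (∀ a, 0 ≤ π t s a) ∧ (∑ a, π t s a) = 1)
    (hc : ∀ s a, 0 ≤ c s a)
    (ε : ℝ) (hε : 0 ≤ ε)
    (hopt : ∀ t, t < T → ∀ s,
      μstar t s ∈ stepFeasible p r c π μstar T ε t s ∧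
      ∀ ν ∈ stepFeasible p r c π μstar T ε t s,
        stepObj p r π μstar T t s (μstar t s) ≤ stepObj p r π μstar T t s ν) :
    (∀ (s : S) (a : A), rtilde p r π μstar T (T - 1) s a = (r s a) ^ 2) ∧
    (∀ t, t + 1 < T → ∀ (s : S) (a : A),
      rtilde p r π μstar T t s a
        = 2 * qval p r π (T - t - 1) t s a * r s a - (r s a) ^ 2
          + ∑ s', ∑ a' ∈ Finset.univ.filter (fun a' => 0 < μstar (t + 1) s' a'),
              p s a s' * π (t + 1) s' a' * (π (t + 1) s' a' / μstar (t + 1) s' a')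
                * rtilde p r π μstar T (t + 1) s' a') :=
  rtilde_recursion_general T hT p r c π μstar hp ε hopt
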